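/- Fix q, a, b ∈ ℂ. Let n ≥ 1 be an integer and let y ∈ ℂ with y ≠ 0 and y ≠ a q^i for all 0 ≤ i ≤ n − 1. Then ∑_{k=0}^{n} B_{n,k}(a,b) y^k = y^n · (b/y;q)_{n−1} / (a/y;q)_n − a · ∑_{k=0}^{n−1} B_{n−k,1}(a,b) q^{(n−k)k} · y^k · (b/y;q)_k / (a/y;q)_{k+1}, where for x ∈ ℂ, (x;q)_m denotes the finite product ∏_{i=0}^{m−1}(1 − x q^i). -/

import Mathlib

open PowerSeries

/-- The finite q-Pochhammer symbol `(x;q)_m = ∏_{i=0}^{m-1} (1 - x q^i)`. -/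
noncomputable def qPoch (q x : ℂ) (m : ℕ) : ℂ :=
  ∏ i ∈ Finset.range m, (1 - x * q ^ i)

/-- The polynomial `(xz;q)_n = ∏_{i=0}^{n-1} (1 - x q^i z)` viewed in `ℂ[[z]]`. -/
noncomputable def qpoly (q x : ℂ) (n : ℕ) : PowerSeries ℂ :=
  ∏ i ∈ Finset.range n, (1 - PowerSeries.C (R := ℂ) (x * q ^ i) * PowerSeries.X)

namespace BGF

lemma constantCoeff_qpoly (q x : ℂ) (n : ℕ) : constantCoeff (qpoly q x n) = 1 := by
  simp [qpoly, map_prod]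

lemma qpoly_zero (q x : ℂ) : qpoly q x 0 = 1 := by simp [qpoly]

lemma qpoly_inv_one (q x : ℂ) : (qpoly q x 0)⁻¹ = 1 := by
  rw [qpoly_zero]; exact inv_one

lemma qpoly_mul_inv (q x : ℂ) (n : ℕ) : qpoly q x n * (qpoly q x n)⁻¹ = 1 :=
  PowerSeries.mul_inv_cancel _ (by rw [constantCoeff_qpoly]; exact one_ne_zero)

lemma qpoly_add (q x : ℂ) (k j : ℕ) :
    qpoly q x (k + j) = qpoly q x k *
      ∏ i ∈ Finset.range j, (1 - PowerSeries.C (x * q ^ (k + i)) * PowerSeries.X) := by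
  rw [qpoly, Finset.prod_range_add]
  simp [qpoly, pow_add, mul_assoc]

lemma rescale_C' (c x : ℂ) : rescale c (C x) = C x := by
  ext n
  simp only [coeff_rescale, PowerSeries.coeff_C]
  rcases eq_or_ne n 0 with rfl | h
  · simp
  · simp [h]

lemma rescale_X' (c : ℂ) : rescale c (X : PowerSeries ℂ) = C c * X := by
  ext n
  simp only [coeff_rescale, coeff_C_mul, PowerSeries.coeff_X]
  rcases eq_or_ne n 1 with rfl | h
  · simp
  · simp [h]

lemma rescale_qpoly (q x c : ℂ) (j : ℕ) :
    rescale c (qpoly q x j) = ∏ i ∈ Finset.range j, (1 - C (x * q ^ i * c) * X) := by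
  rw [qpoly, map_prod]
  refine Finset.prod_congr rfl fun i _ => ?_
  rw [map_sub, map_one, map_mul, rescale_X', rescale_C']
  rw [← mul_assoc, ← map_mul]


lemma rescale_inv (c : ℂ) (f : PowerSeries ℂ) (h : constantCoeff f ≠ 0) :
    rescale c (f⁻¹) = (rescale c f)⁻¹ := by
  have hc : constantCoeff (rescale c f) ≠ 0 := by
    have : constantCoeff (rescale c f) = constantCoeff f := by
      simp [← coeff_zero_eq_constantCoeff, coeff_rescale]
    rwa [this]
  rw [PowerSeries.eq_inv_iff_mul_eq_one hc, ← map_mul, PowerSeries.inv_mul_cancel _ h, map_one]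

noncomputable def Pb (q a b : ℂ) (m : ℕ) : PowerSeries ℂ :=
  X ^ m * qpoly q a m * (qpoly q b m)⁻¹

noncomputable def Co (q a b : ℂ) (N m : ℕ) : ℂ := coeff N (Pb q a b m)

lemma Pb_eq (q a b : ℂ) (m : ℕ) :
    Pb q a b m = X ^ m * (qpoly q a m * (qpoly q b m)⁻¹) := by
  rw [Pb, mul_assoc]

lemma Co_eq_zero (q a b : ℂ) {N m : ℕ} (h : N < m) : Co q a b N m = 0 := by
  rw [Co, Pb_eq, PowerSeries.coeff_X_pow_mul', if_neg (by omega)]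

lemma Co_diag (q a b : ℂ) (m : ℕ) : Co q a b m m = 1 := by
  rw [Co, Pb_eq]
  have := PowerSeries.coeff_X_pow_mul (qpoly q a m * (qpoly q b m)⁻¹) m 0
  rw [zero_add] at this
  rw [this, coeff_zero_eq_constantCoeff, map_mul, constantCoeff_qpoly,
    PowerSeries.constantCoeff_inv, constantCoeff_qpoly]
  norm_num

lemma Pb_add (q a b : ℂ) (k j : ℕ) :
    C (q ^ (k * j)) * Pb q a b (k + j) = Pb q a b k * rescale (q ^ k) (Pb q a b j) := by
  rw [Pb, Pb, Pb, map_mul, map_mul, rescale_inv _ _ (by rw [constantCoeff_qpoly]; exact one_ne_zero)]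
  rw [map_pow (rescale (q ^ k)) X j, rescale_X', rescale_qpoly, rescale_qpoly]
  rw [show (∏ i ∈ Finset.range j, (1 - C (a * q ^ i * q ^ k) * X)) =
      ∏ i ∈ Finset.range j, (1 - C (a * q ^ (k + i)) * X) from
    Finset.prod_congr rfl fun i _ => by rw [show a * q ^ i * q ^ k = a * q ^ (k + i) by ring]]
  rw [show (∏ i ∈ Finset.range j, (1 - C (b * q ^ i * q ^ k) * X)) =
      ∏ i ∈ Finset.range j, (1 - C (b * q ^ (k + i)) * X) from
    Finset.prod_congr rfl fun i _ => by rw [show b * q ^ i * q ^ k = b * q ^ (k + i) by ring]]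
  rw [qpoly_add q a k j, qpoly_add q b k j, PowerSeries.mul_inv_rev]
  rw [pow_add, mul_pow, ← map_pow, ← pow_mul, mul_comm k j]
  ring


lemma Co_def (q a b : ℂ) (N m : ℕ) :
    Co q a b N m = coeff N (X ^ m * qpoly q a m * (qpoly q b m)⁻¹) := rfl

lemma L3 (q a b : ℂ) (B : ℕ → ℕ → ℂ)
    (hB0 : ∀ n k : ℕ, n < k → B n k = 0)
    (hB : ∀ N k : ℕ,
      (PowerSeries.coeff N) (PowerSeries.X ^ k) =
        ∑ n ∈ Finset.range (N + 1),
          B n k * (PowerSeries.coeff N)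
            (PowerSeries.X ^ n * qpoly q a n * (qpoly q b n)⁻¹))
    {N k : ℕ} (hk : k < N) :
    ∑ j ∈ Finset.range (N - k), B (j+1) 1 * q ^ (k * (j+1)) * Co q a b N (k + (j+1))
      = q ^ k * Co q a b (N-1) k := by
  set T := N - k with hT
  have hT1 : 1 ≤ T := by omega
  set E : PowerSeries ℂ :=
    (∑ j ∈ Finset.range (T+1), C (B j 1) * Pb q a b j) - X with hEdef
  have hE : ∀ M, M ≤ T → coeff M E = 0 := by
    intro M hM
    have hsub : ∑ j ∈ Finset.range (T+1), B j 1 * Co q a b M j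
        = ∑ j ∈ Finset.range (M+1), B j 1 * Co q a b M j := by
      refine (Finset.sum_subset (Finset.range_subset_range.2 (by omega)) ?_).symm
      intro x _ hx
      rw [Finset.mem_range, not_lt] at hx
      rw [Co_eq_zero q a b (by omega), mul_zero]
    have h1 : coeff M E
        = (∑ j ∈ Finset.range (T+1), B j 1 * Co q a b M j) - coeff M X := by
      rw [hEdef, map_sub, map_sum]
      congr 1
      exact Finset.sum_congr rfl fun j _ => by rw [coeff_C_mul]; rfl
    have hBM : coeff M X = ∑ j ∈ Finset.range (M + 1), B j 1 * Co q a b M j := by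
      simpa only [pow_one, ← Co_def] using hB M 1
    rw [h1, hsub, hBM, sub_self]
  have hterm : ∀ j', B j' 1 * q ^ (k * j') * Co q a b N (k + j')
      = B j' 1 * coeff N (Pb q a b k * rescale (q ^ k) (Pb q a b j')) := by
    intro j'
    rw [← Pb_add, coeff_C_mul]; rw [Co]; ring
  have hmain : ∑ j' ∈ Finset.range (T+1),
      B j' 1 * q ^ (k * j') * Co q a b N (k + j') = q ^ k * Co q a b (N-1) k := by
    have hstep : ∑ j' ∈ Finset.range (T+1),
        B j' 1 * q ^ (k * j') * Co q a b N (k + j')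
        = coeff N (Pb q a b k *
            rescale (q ^ k) (∑ j' ∈ Finset.range (T+1), C (B j' 1) * Pb q a b j')) := by
      rw [map_sum, Finset.mul_sum, map_sum]
      refine Finset.sum_congr rfl fun j' _ => ?_
      rw [hterm j', map_mul (rescale (q ^ k)), rescale_C',
        show Pb q a b k * (C (B j' 1) * rescale (q ^ k) (Pb q a b j'))
          = C (B j' 1) * (Pb q a b k * rescale (q ^ k) (Pb q a b j')) by ring,
        coeff_C_mul]
    rw [hstep]
    have hXE : (∑ j' ∈ Finset.range (T+1), C (B j' 1) * Pb q a b j') = X + E := by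
      rw [hEdef]; ring
    rw [hXE, map_add, rescale_X', mul_add, map_add]
    have h2 : coeff N (Pb q a b k * rescale (q ^ k) E) = 0 := by
      rw [PowerSeries.coeff_mul]
      refine Finset.sum_eq_zero fun p hp => ?_
      rw [Finset.HasAntidiagonal.mem_antidiagonal] at hp
      rcases lt_or_ge p.1 k with h | h
      · rw [show coeff p.1 (Pb q a b k) = (0:ℂ) from Co_eq_zero q a b h, zero_mul]
      · rw [coeff_rescale, hE p.2 (by omega), mul_zero, mul_zero]
    rw [h2, add_zero]
    obtain ⟨M, rfl⟩ : ∃ M, N = M + 1 := ⟨N - 1, by omega⟩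
    rw [show Pb q a b k * (C (q ^ k) * X) = C (q ^ k) * (X * Pb q a b k) by ring,
      coeff_C_mul, PowerSeries.coeff_succ_X_mul]
    simp [Co]
  rw [← hmain, Finset.sum_range_succ']
  rw [hB0 0 1 (by norm_num)]
  simp


lemma qPoch_zero (q x : ℂ) : qPoch q x 0 = 1 := by simp [qPoch]

lemma qPoch_succ (q x : ℂ) (m : ℕ) : qPoch q x (m+1) = qPoch q x m * (1 - x * q ^ m) :=
  Finset.prod_range_succ _ _

lemma qpoly_succ (q x : ℂ) (m : ℕ) :
    qpoly q x (m+1) = qpoly q x m * (1 - C (x * q ^ m) * X) :=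
  Finset.prod_range_succ _ _

lemma qpoly_inv_succ (q x : ℂ) (m : ℕ) :
    (qpoly q x m)⁻¹ = (qpoly q x (m+1))⁻¹ * (1 - C (x * q ^ m) * X) := by
  rw [PowerSeries.inv_eq_iff_mul_eq_one (by rw [constantCoeff_qpoly]; exact one_ne_zero)]
  rw [show (qpoly q x (m+1))⁻¹ * (1 - C (x * q ^ m) * X) * qpoly q x m
      = (qpoly q x (m+1))⁻¹ * (qpoly q x m * (1 - C (x * q ^ m) * X)) by ring,
    ← qpoly_succ, PowerSeries.inv_mul_cancel _ (by rw [constantCoeff_qpoly]; exact one_ne_zero)]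

section Main

variable (q a b y : ℂ)

lemma Phi (hy : y ≠ 0) (n : ℕ) (hn : 1 ≤ n)
    (hya : ∀ i, i < n → y ≠ a * q ^ i) (t : ℕ) (ht : t ≤ n - 1) :
    (∑ m ∈ Finset.range (t+1),
        (C (y ^ m * (qPoch q (b/y) (m-1) / qPoch q (a/y) m))
          - C (a * (q ^ m * y ^ m * (qPoch q (b/y) m / qPoch q (a/y) (m+1)))) * X)
          * Pb q a b m)
      * (1 - C y * X)
    = 1 - C (y ^ (t+1) * (qPoch q (b/y) t / qPoch q (a/y) (t+1))) *
        (X ^ (t+1) * qpoly q a (t+1) * (qpoly q b t)⁻¹) := by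
  have hfac : ∀ i, i < n → (1 : ℂ) - a / y * q ^ i ≠ 0 := by
    intro i hi h
    apply hya i hi
    have h1 : a / y * q ^ i = 1 := by linear_combination -h
    field_simp at h1
    exact h1.symm
  have hpoch : ∀ m, m ≤ n → qPoch q (a/y) m ≠ 0 := by
    intro m hm
    rw [qPoch]
    exact Finset.prod_ne_zero_iff.2 fun i hi => hfac i (by
      rw [Finset.mem_range] at hi; omega)
  induction t with
  | zero =>
      have h0 : y ≠ a := by simpa using hya 0 hn
      have h2 : (1:ℂ) - a / y * q ^ 0 ≠ 0 := hfac 0 hn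
      have hS0 : (y - a) * (1 / qPoch q (a/y) 1) = y := by
        rw [qPoch, Finset.prod_range_one]
        rw [pow_zero, mul_one] at h2 ⊢
        field_simp
      have hC := congrArg (C (R := ℂ)) hS0
      simp only [map_mul, map_sub] at hC
      rw [zero_add, Finset.sum_range_one]
      simp only [zero_add, Pb, qpoly_zero, qpoly_inv_one, qpoly_succ, pow_zero, pow_one,
        Nat.zero_sub, qPoch_zero, one_mul, mul_one, div_one, map_one, inv_one]
      simp only [map_mul, map_one]
      linear_combination X * hC
  | succ t ih =>
      have ht' : t ≤ n - 1 := by omega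
      have hSstep : (y - a * q ^ (t+1)) * (qPoch q (b/y) (t+1) / qPoch q (a/y) (t+2))
          = (y - b * q ^ t) * (qPoch q (b/y) t / qPoch q (a/y) (t+1)) := by
        have h1 : qPoch q (a/y) (t+1) ≠ 0 := hpoch (t+1) (by omega)
        have h2 : (1 : ℂ) - a / y * q ^ (t+1) ≠ 0 := hfac (t+1) (by omega)
        have h3 : y - a * q ^ (t+1) ≠ 0 := sub_ne_zero.2 (hya (t+1) (by omega))
        have key : y - a * q ^ (t+1) = y * (1 - a / y * q ^ (t+1)) := by field_simp
        rw [show t + 2 = (t+1)+1 from rfl, qPoch_succ q (a/y) (t+1), qPoch_succ q (b/y) t, key]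
        field_simp [h1, h2]
      have hC := congrArg (C (R := ℂ)) hSstep
      simp only [map_mul, map_sub, map_pow, map_div₀, map_one] at hC
      rw [Finset.sum_range_succ, add_mul, ih ht']
      have hdagger :
          (C (y ^ (t+1) * (qPoch q (b/y) ((t+1)-1) / qPoch q (a/y) (t+1)))
            - C (a * (q ^ (t+1) * y ^ (t+1) *
                (qPoch q (b/y) (t+1) / qPoch q (a/y) (t+1+1)))) * X)
            * Pb q a b (t+1) * (1 - C y * X)
          = C (y ^ (t+1) * (qPoch q (b/y) t / qPoch q (a/y) (t+1))) *
              (X ^ (t+1) * qpoly q a (t+1) * (qpoly q b t)⁻¹)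
            - C (y ^ (t+2) * (qPoch q (b/y) (t+1) / qPoch q (a/y) (t+2))) *
              (X ^ (t+2) * qpoly q a (t+2) * (qpoly q b (t+1))⁻¹) := by
        rw [Nat.add_sub_cancel, Pb, qpoly_inv_succ q b t, qpoly_succ q a (t+1)]
        simp only [map_mul, map_pow]
        linear_combination (C y ^ (t+1) *
          (X ^ (t+1) * qpoly q a (t+1) * (qpoly q b (t+1))⁻¹) * X) * hC
      rw [hdagger]
      ring


lemma geom_mul : (1 - C y * X) * (PowerSeries.mk fun i => y ^ i) = 1 := by
  rw [sub_mul, one_mul, mul_assoc]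
  ext N
  rcases N with _ | N
  · simp [PowerSeries.coeff_zero_eq_constantCoeff]
  · simp only [map_sub, PowerSeries.coeff_mk, coeff_C_mul, PowerSeries.coeff_succ_X_mul,
      PowerSeries.coeff_mk, PowerSeries.coeff_one, Nat.succ_ne_zero, if_false]
    ring

lemma E1 (hy : y ≠ 0) (n : ℕ) (hn : 1 ≤ n)
    (hya : ∀ i, i < n → y ≠ a * q ^ i) (t : ℕ) (ht : t + 1 ≤ n) :
    ∑ m ∈ Finset.range (t+1),
      (y ^ m * (qPoch q (b/y) (m-1) / qPoch q (a/y) m) * Co q a b (t+1) m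
        - a * (q ^ m * y ^ m * (qPoch q (b/y) m / qPoch q (a/y) (m+1))) * Co q a b t m)
    = y ^ (t+1) - y ^ (t+1) * (qPoch q (b/y) t / qPoch q (a/y) (t+1)) := by
  have hphi := Phi q a b y hy n hn hya t (by omega)
  set g : PowerSeries ℂ := PowerSeries.mk fun i => y ^ i with hgdef
  set rho : PowerSeries ℂ := C (y ^ (t+1) * (qPoch q (b/y) t / qPoch q (a/y) (t+1))) *
      (X ^ (t+1) * qpoly q a (t+1) * (qpoly q b t)⁻¹) with hrho
  have hS : (∑ m ∈ Finset.range (t+1),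
        (C (y ^ m * (qPoch q (b/y) (m-1) / qPoch q (a/y) m))
          - C (a * (q ^ m * y ^ m * (qPoch q (b/y) m / qPoch q (a/y) (m+1)))) * X)
          * Pb q a b m)
      = g - rho * g := by
    calc (∑ m ∈ Finset.range (t+1),
        (C (y ^ m * (qPoch q (b/y) (m-1) / qPoch q (a/y) m))
          - C (a * (q ^ m * y ^ m * (qPoch q (b/y) m / qPoch q (a/y) (m+1)))) * X)
          * Pb q a b m)
        = (∑ m ∈ Finset.range (t+1),
        (C (y ^ m * (qPoch q (b/y) (m-1) / qPoch q (a/y) m))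
          - C (a * (q ^ m * y ^ m * (qPoch q (b/y) m / qPoch q (a/y) (m+1)))) * X)
          * Pb q a b m) * ((1 - C y * X) * g) := by rw [geom_mul, mul_one]
      _ = ((∑ m ∈ Finset.range (t+1),
        (C (y ^ m * (qPoch q (b/y) (m-1) / qPoch q (a/y) m))
          - C (a * (q ^ m * y ^ m * (qPoch q (b/y) m / qPoch q (a/y) (m+1)))) * X)
          * Pb q a b m) * (1 - C y * X)) * g := by ring
      _ = (1 - rho) * g := by rw [hphi]
      _ = g - rho * g := by ring
  have hc := congrArg (coeff (t+1)) hS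
  rw [map_sum] at hc
  have hL : ∀ m ∈ Finset.range (t+1),
      coeff (t+1) ((C (y ^ m * (qPoch q (b/y) (m-1) / qPoch q (a/y) m))
          - C (a * (q ^ m * y ^ m * (qPoch q (b/y) m / qPoch q (a/y) (m+1)))) * X)
          * Pb q a b m)
      = y ^ m * (qPoch q (b/y) (m-1) / qPoch q (a/y) m) * Co q a b (t+1) m
        - a * (q ^ m * y ^ m * (qPoch q (b/y) m / qPoch q (a/y) (m+1))) * Co q a b t m := by
    intro m _
    rw [show (C (y ^ m * (qPoch q (b/y) (m-1) / qPoch q (a/y) m))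
          - C (a * (q ^ m * y ^ m * (qPoch q (b/y) m / qPoch q (a/y) (m+1)))) * X)
          * Pb q a b m
        = C (y ^ m * (qPoch q (b/y) (m-1) / qPoch q (a/y) m)) * Pb q a b m
          - C (a * (q ^ m * y ^ m * (qPoch q (b/y) m / qPoch q (a/y) (m+1))))
            * (X * Pb q a b m) by ring]
    rw [map_sub, coeff_C_mul, coeff_C_mul, PowerSeries.coeff_succ_X_mul]
    rfl
  rw [Finset.sum_congr rfl hL] at hc
  have hR : coeff (t+1) (g - rho * g)
      = y ^ (t+1) - y ^ (t+1) * (qPoch q (b/y) t / qPoch q (a/y) (t+1)) := by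
    rw [map_sub]
    have h1 : coeff (t+1) g = y ^ (t+1) := by rw [hgdef, PowerSeries.coeff_mk]
    have h2 : coeff (t+1) (rho * g)
        = y ^ (t+1) * (qPoch q (b/y) t / qPoch q (a/y) (t+1)) := by
      rw [show rho * g = C (y ^ (t+1) * (qPoch q (b/y) t / qPoch q (a/y) (t+1))) *
          (X ^ (t+1) * (qpoly q a (t+1) * ((qpoly q b t)⁻¹ * g))) by rw [hrho]; ring]
      have h3 := PowerSeries.coeff_X_pow_mul (qpoly q a (t+1) * ((qpoly q b t)⁻¹ * g)) (t+1) 0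
      rw [zero_add] at h3
      rw [coeff_C_mul, h3, PowerSeries.coeff_zero_eq_constantCoeff, map_mul, map_mul,
        constantCoeff_qpoly, PowerSeries.constantCoeff_inv, constantCoeff_qpoly]
      simp [hgdef]
    rw [h1, h2]
  rw [hR] at hc
  exact hc

end Main

lemma sum_tri (f : ℕ → ℕ → ℂ) (N : ℕ) :
    ∑ m ∈ Finset.range (N+1), ∑ k ∈ Finset.range m, f m k
      = ∑ k ∈ Finset.range N, ∑ j ∈ Finset.range (N - k), f (k + (j+1)) k := by
  induction N with
  | zero => simp
  | succ N ih =>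
      rw [Finset.sum_range_succ, ih,
        Finset.sum_range_succ (fun k => ∑ j ∈ Finset.range (N + 1 - k), f (k + (j+1)) k) N]
      have h1 : ∀ k ∈ Finset.range N,
          ∑ j ∈ Finset.range (N + 1 - k), f (k + (j+1)) k
            = ∑ j ∈ Finset.range (N - k), f (k + (j+1)) k + f (N+1) k := by
        intro k hk
        rw [Finset.mem_range] at hk
        rw [show N + 1 - k = (N - k) + 1 by omega, Finset.sum_range_succ,
          show k + (N - k + 1) = N + 1 by omega]
      rw [Finset.sum_congr rfl h1, Finset.sum_add_distrib,
        show N + 1 - N = 1 by omega, Finset.sum_range_one,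
        show N + (0 + 1) = N + 1 by omega,
        Finset.sum_range_succ (fun k => f (N+1) k) N]
      ring

noncomputable def Gf (q a b y : ℂ) (B : ℕ → ℕ → ℂ) (m : ℕ) : ℂ :=
  y ^ m * qPoch q (b / y) (m - 1) / qPoch q (a / y) m -
    a * ∑ k ∈ Finset.range m, B (m - k) 1 * q ^ ((m - k) * k) *
      (y ^ k * qPoch q (b / y) k / qPoch q (a / y) (k + 1))

end BGF

open BGF

/-- Corollary 2.4: the finite univariate generating function of `B_{n,k}(a,b)`:
`∑_{k=0}^n B_{n,k}(a,b) y^k = y^n (b/y;q)_{n−1}/(a/y;q)_n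
  − a ∑_{k=0}^{n−1} B_{n−k,1}(a,b) q^{(n−k)k} y^k (b/y;q)_k/(a/y;q)_{k+1}`. -/
theorem B_generating_function (q a b : ℂ)
    (B : ℕ → ℕ → ℂ)
    (hB0 : ∀ n k : ℕ, n < k → B n k = 0)
    (hB : ∀ N k : ℕ,
      (PowerSeries.coeff (R := ℂ) N) (PowerSeries.X ^ k) =
        ∑ n ∈ Finset.range (N + 1),
          B n k * (PowerSeries.coeff (R := ℂ) N)
            (PowerSeries.X ^ n * qpoly q a n * (qpoly q b n)⁻¹))
    (n : ℕ) (hn : 1 ≤ n) (y : ℂ) (hy : y ≠ 0)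
    (hya : ∀ i : ℕ, i < n → y ≠ a * q ^ i) :
    ∑ k ∈ Finset.range (n + 1), B n k * y ^ k
      = y ^ n * qPoch q (b / y) (n - 1) / qPoch q (a / y) n
        - a * ∑ k ∈ Finset.range n,
            B (n - k) 1 * q ^ ((n - k) * k) *
              (y ^ k * qPoch q (b / y) k / qPoch q (a / y) (k + 1)) := by
  have hR : ∀ N : ℕ, y ^ N = ∑ m ∈ Finset.range (N+1), Co q a b N m *
      (∑ k ∈ Finset.range (m+1), B m k * y ^ k) := by
    intro N
    have h1 : (y:ℂ) ^ N = ∑ k ∈ Finset.range (N+1),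
        y ^ k * coeff N (X ^ k : PowerSeries ℂ) := by
      rw [Finset.sum_eq_single N]
      · rw [PowerSeries.coeff_X_pow, if_pos rfl, mul_one]
      · intro k _ hne
        rw [PowerSeries.coeff_X_pow, if_neg (fun h => hne h.symm), mul_zero]
      · intro h; exact absurd (Finset.self_mem_range_succ N) h
    rw [h1]
    have h2 : ∀ k ∈ Finset.range (N+1), y ^ k * coeff N (X ^ k : PowerSeries ℂ)
        = ∑ m ∈ Finset.range (N+1), Co q a b N m * (B m k * y ^ k) := by
      intro k _
      rw [hB N k, Finset.mul_sum]
      exact Finset.sum_congr rfl fun m _ => by rw [← Co_def]; ring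
    rw [Finset.sum_congr rfl h2, Finset.sum_comm]
    refine Finset.sum_congr rfl fun m hm => ?_
    rw [Finset.mem_range] at hm
    rw [← Finset.mul_sum]
    congr 1
    refine (Finset.sum_subset (Finset.range_subset_range.2 (by omega)) ?_).symm
    intro k _ hk
    rw [Finset.mem_range, not_lt] at hk
    rw [hB0 m k (by omega), zero_mul]
  have hss : ∀ t : ℕ, t + 1 ≤ n →
      (∑ m ∈ Finset.range (t+2),
          y ^ m * (qPoch q (b/y) (m-1) / qPoch q (a/y) m) * Co q a b (t+1) m)
        - ∑ m ∈ Finset.range (t+1),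
            a * (q ^ m * y ^ m * (qPoch q (b/y) m / qPoch q (a/y) (m+1))) * Co q a b t m
      = y ^ (t+1) := by
    intro t ht
    have h := E1 q a b y hy n hn hya t ht
    rw [Finset.sum_sub_distrib] at h
    rw [Finset.sum_range_succ, Nat.add_sub_cancel, Co_diag, mul_one]
    linear_combination h
  have hstar : ∀ N : ℕ, N ≤ n →
      ∑ m ∈ Finset.range (N+1), Co q a b N m * Gf q a b y B m = y ^ N := by
    intro N hN
    rcases N with _ | t
    · rw [Finset.sum_range_one, Co_diag, one_mul, Gf]
      simp [qPoch_zero]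
    · have hGm : ∀ m, Co q a b (t+1) m * Gf q a b y B m
          = y ^ m * (qPoch q (b/y) (m-1) / qPoch q (a/y) m) * Co q a b (t+1) m
            - (∑ k ∈ Finset.range m, Co q a b (t+1) m *
                (B (m-k) 1 * q ^ ((m-k)*k) *
                  (y ^ k * qPoch q (b/y) k / qPoch q (a/y) (k+1)))) * a := by
        intro m
        rw [Gf, mul_sub, ← Finset.mul_sum]
        ring
      calc ∑ m ∈ Finset.range (t+2), Co q a b (t+1) m * Gf q a b y B m
          = (∑ m ∈ Finset.range (t+2),
              y ^ m * (qPoch q (b/y) (m-1) / qPoch q (a/y) m) * Co q a b (t+1) m)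
            - (∑ m ∈ Finset.range (t+2), ∑ k ∈ Finset.range m, Co q a b (t+1) m *
                (B (m-k) 1 * q ^ ((m-k)*k) *
                  (y ^ k * qPoch q (b/y) k / qPoch q (a/y) (k+1)))) * a := by
            rw [Finset.sum_congr rfl fun m _ => hGm m, Finset.sum_sub_distrib,
              ← Finset.sum_mul]
        _ = (∑ m ∈ Finset.range (t+2),
              y ^ m * (qPoch q (b/y) (m-1) / qPoch q (a/y) m) * Co q a b (t+1) m)
            - (∑ k ∈ Finset.range (t+1), ∑ j ∈ Finset.range (t+1-k),
                Co q a b (t+1) (k+(j+1)) *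
                (B (j+1) 1 * q ^ ((j+1)*k) *
                  (y ^ k * qPoch q (b/y) k / qPoch q (a/y) (k+1)))) * a := by
            rw [sum_tri]
            simp only [Nat.add_sub_cancel_left]
        _ = (∑ m ∈ Finset.range (t+2),
              y ^ m * (qPoch q (b/y) (m-1) / qPoch q (a/y) m) * Co q a b (t+1) m)
            - (∑ k ∈ Finset.range (t+1),
                (y ^ k * qPoch q (b/y) k / qPoch q (a/y) (k+1)) *
                  (q ^ k * Co q a b t k)) * a := by
            congr 2
            refine Finset.sum_congr rfl fun k hk => ?_
            rw [Finset.mem_range] at hk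
            have hL3 := L3 q a b B hB0 hB (show k < t+1 by omega)
            rw [Nat.add_sub_cancel] at hL3
            calc ∑ j ∈ Finset.range (t+1-k), Co q a b (t+1) (k+(j+1)) *
                  (B (j+1) 1 * q ^ ((j+1)*k) *
                    (y ^ k * qPoch q (b/y) k / qPoch q (a/y) (k+1)))
                = (y ^ k * qPoch q (b/y) k / qPoch q (a/y) (k+1)) *
                    ∑ j ∈ Finset.range (t+1-k),
                      B (j+1) 1 * q ^ (k*(j+1)) * Co q a b (t+1) (k+(j+1)) := by
                  rw [Finset.mul_sum]
                  refine Finset.sum_congr rfl fun j _ => ?_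
                  rw [show (j+1)*k = k*(j+1) by ring]
                  ring
              _ = (y ^ k * qPoch q (b/y) k / qPoch q (a/y) (k+1)) *
                    (q ^ k * Co q a b t k) := by rw [hL3]
        _ = y ^ (t+1) := by
            have h := hss t (by omega)
            have halign : (∑ k ∈ Finset.range (t+1),
                (y ^ k * qPoch q (b/y) k / qPoch q (a/y) (k+1)) *
                  (q ^ k * Co q a b t k)) * a
                = ∑ m ∈ Finset.range (t+1),
                    a * (q ^ m * y ^ m * (qPoch q (b/y) m / qPoch q (a/y) (m+1))) *
                      Co q a b t m := by
              rw [Finset.sum_mul]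
              exact Finset.sum_congr rfl fun k _ => by ring
            linear_combination h - halign
  have key : ∀ N, N ≤ n →
      (∑ k ∈ Finset.range (N + 1), B N k * y ^ k) = Gf q a b y B N := by
    intro N
    induction N using Nat.strong_induction_on with
    | _ N ih =>
      intro hNn
      have h1 := hR N
      have h2 := hstar N hNn
      rw [Finset.sum_range_succ] at h1 h2
      rw [Co_diag, one_mul] at h1 h2
      have h3 : ∑ m ∈ Finset.range N, Co q a b N m *
            (∑ k ∈ Finset.range (m+1), B m k * y ^ k)
          = ∑ m ∈ Finset.range N, Co q a b N m * Gf q a b y B m :=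
        Finset.sum_congr rfl fun m hm => by
          have hmN := Finset.mem_range.1 hm
          rw [ih m hmN (by omega)]
      linear_combination -h1 - h2 - h3
  exact key n le_rfl
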